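/- Let μ ∈ (0, 1/2] and c > 0. Suppose x_i, x_j : ℕ → ℝ converge to limits Xi, Xj with 0 < Xi - Xj < c. Fix ε with 0 < ε < min{(c - (Xi - Xj))/4, (Xi - Xj)/(2(1 + 1/μ))}, and suppose |x_k(t) - Xk| < ε for k ∈ {i,j} and all t ≥ T. If at some time t ≥ T the update x_j(t+1) = x_j(t) + μ(x_i(t) - x_j(t)) is applied, then x_j(t+1) > Xj + ε, contradicting |x_j(t+1) - Xj| < ε. Hence no DW opinion update between i and j can occur at any time t ≥ T. -/
import Mathlib


open Filter Topology

theorem stmt_9 (μ c : ℝ) (hμ : μ ∈ Set.Ioc (0:ℝ) (1/2)) (hc : 0 < c)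
    (xi xj : ℕ → ℝ) (Xi Xj : ℝ)
    (hi : Tendsto xi atTop (𝓝 Xi)) (hj : Tendsto xj atTop (𝓝 Xj))
    (hgap : 0 < Xi - Xj) (hgapc : Xi - Xj < c)
    (ε : ℝ) (hε0 : 0 < ε)
    (hεlt : ε < min ((c - (Xi - Xj)) / 4) ((Xi - Xj) / (2 * (1 + 1 / μ))))
    (T : ℕ)
    (hclose_i : ∀ t ≥ T, |xi t - Xi| < ε)
    (hclose_j : ∀ t ≥ T, |xj t - Xj| < ε) :
    (∀ t ≥ T, xj (t + 1) = xj t + μ * (xi t - xj t) → xj (t + 1) > Xj + ε) ∧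
    (∀ t ≥ T, xj (t + 1) ≠ xj t + μ * (xi t - xj t)) := by
  obtain ⟨hμ0, hμ2⟩ := hμ
  have hεlt2 : ε < (Xi - Xj) / (2 * (1 + 1 / μ)) := lt_of_lt_of_le hεlt (min_le_right _ _)
  have hinv : 0 < 1 / μ := by positivity
  have key : ∀ t ≥ T, xj (t + 1) = xj t + μ * (xi t - xj t) → xj (t + 1) > Xj + ε := by
    intro t ht heq
    have h1 := abs_lt.mp (hclose_i t ht)
    have h2 := abs_lt.mp (hclose_j t ht)
    have hε' : ε * (2 * (1 + 1 / μ)) < Xi - Xj :=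
      (lt_div_iff₀ (by positivity)).mp hεlt2
    have hexp : μ * (ε * (2 * (1 + 1 / μ))) = 2 * μ * ε + 2 * ε := by
      field_simp
    have hkey : μ * (Xi - Xj - 2 * ε) > 2 * ε := by
      have h := mul_lt_mul_of_pos_left hε' hμ0
      rw [hexp] at h
      nlinarith
    have hdiff : xi t - xj t > Xi - Xj - 2 * ε := by linarith
    have := mul_lt_mul_of_pos_left hdiff hμ0
    rw [heq]; nlinarith
  refine ⟨key, fun t ht heq => ?_⟩
  have h3 := abs_lt.mp (hclose_j (t+1) (le_trans ht (Nat.le_succ t)))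
  have := key t ht heq
  linarith [h3.2]
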